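/- If every argument a of a may-must argumentation F has f_Q(a) = ((|pre(a)|, |pre(a)|), (1,1)), then every labelling λ of F is deterministic in the sense that for each argument a, λ designates exactly one label for a; specifically, λ designates in for a iff all attackers of a are labelled out, λ designates out for a iff some attacker of a is labelled in, and λ designates undec for a otherwise. -/

import Mathlib

inductive Lab : Type
  | inn | out | undec
deriving DecidableEq

structure MMA (A : Type) [Fintype A] [DecidableEq A] where
  R : A → A → Prop
  decR : DecidableRel R
  n1 : A → ℕ
  n2 : A → ℕ
  m1 : A → ℕ
  m2 : A → ℕ
  hn : ∀ a, n1 a ≤ n2 a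
  hm : ∀ a, m1 a ≤ m2 a

variable {A : Type} [Fintype A] [DecidableEq A]

/-- Number of attackers of `a` labelled `out` by `lam`. -/
def outCnt (F : MMA A) (lam : A → Lab) (a : A) : ℕ :=
  letI := F.decR
  (Finset.univ.filter (fun b => F.R b a ∧ lam b = Lab.out)).card

/-- Number of attackers of `a` labelled `in` by `lam`. -/
def inCnt (F : MMA A) (lam : A → Lab) (a : A) : ℕ :=
  letI := F.decR
  (Finset.univ.filter (fun b => F.R b a ∧ lam b = Lab.inn)).card

/-- `lam` designates label `l` for argument `a` in `F`. -/
def designates (F : MMA A) (lam : A → Lab) (a : A) : Lab → Prop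
  | Lab.inn => F.n1 a ≤ outCnt F lam a ∧ inCnt F lam a < F.m2 a
  | Lab.out => F.m1 a ≤ inCnt F lam a ∧ outCnt F lam a < F.n2 a
  | Lab.undec =>
      (F.n2 a ≤ outCnt F lam a ∧ F.m2 a ≤ inCnt F lam a) ∨
      (F.n1 a ≤ outCnt F lam a ∧ outCnt F lam a < F.n2 a) ∨
      (F.m1 a ≤ inCnt F lam a ∧ inCnt F lam a < F.m2 a) ∨
      (outCnt F lam a < F.n1 a ∧ inCnt F lam a < F.m1 a)

/-- `a`'s label is proper under `lam`. -/
def proper (F : MMA A) (lam : A → Lab) (a : A) : Prop :=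
  designates F lam a (lam a)

/-- Exact labelling: every argument's label is proper. -/
def exactLab (F : MMA A) (lam : A → Lab) : Prop :=
  ∀ a, proper F lam a

/-- Pre-maximally proper labelling. -/
def preMaxProper (F : MMA A) (lam : A → Lab) : Prop :=
  ∀ a, proper F lam a ∨ lam a = Lab.undec

/-- Maximally proper labelling. -/
def maxProper (F : MMA A) (lam : A → Lab) : Prop :=
  preMaxProper F lam ∧
    ∀ lam', preMaxProper F lam' → ∀ a, proper F lam' a → proper F lam a

/-- The order `⪯` on labellings. -/
def labLE (l1 l2 : A → Lab) : Prop :=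
  ∀ a, (l1 a = Lab.inn → l2 a = Lab.inn) ∧ (l1 a = Lab.out → l2 a = Lab.out)

/-- Number of attackers of `a`. -/
def preCard (F : MMA A) (a : A) : ℕ :=
  letI := F.decR
  (Finset.univ.filter (fun b => F.R b a)).card

/-! The attackers of `a` labelled `out` and those labelled `in` are disjoint, so
`outCnt + inCnt ≤ preCard`. With the thresholds `n = |pre(a)|` and `m = 1` the four
designation conditions therefore collapse to `outCnt = preCard` (all attackers out),
`0 < inCnt` (some attacker in), and the failure of both; these three cases are mutually
exclusive and exhaustive. -/

section Counts

variable (F : MMA A) (lam : A → Lab) (a : A)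

lemma outCnt_add_inCnt_le_preCard : outCnt F lam a + inCnt F lam a ≤ preCard F a := by
  let _ := F.decR
  unfold outCnt inCnt preCard
  rw [← Finset.card_union_of_disjoint]
  · exact Finset.card_le_card fun b hb => by
      simp only [Finset.mem_union, Finset.mem_filter] at hb ⊢
      exact ⟨hb.elim (·.1) (·.1), hb.elim (·.2.1) (·.2.1)⟩
  · exact Finset.disjoint_filter.2 fun b _ hout hin => by simp [hout.2] at hin

lemma outCnt_eq_preCard_iff :
    outCnt F lam a = preCard F a ↔ ∀ b, F.R b a → lam b = Lab.out := by
  let _ := F.decR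
  unfold outCnt preCard
  rw [← Finset.filter_filter, Finset.card_filter_eq_iff]
  simp

lemma inCnt_pos_iff : 0 < inCnt F lam a ↔ ∃ b, F.R b a ∧ lam b = Lab.inn := by
  let _ := F.decR
  unfold inCnt
  simp [Finset.card_pos, Finset.filter_nonempty_iff]

end Counts

section GroundedThresholds

variable {F : MMA A} {lam : A → Lab} {a : A}

lemma designates_inn_iff (hn1 : F.n1 a = preCard F a) (hm2 : F.m2 a = 1) :
    designates F lam a Lab.inn ↔ outCnt F lam a = preCard F a := by
  have := outCnt_add_inCnt_le_preCard F lam a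
  simp only [designates, hn1, hm2]
  omega

lemma designates_out_iff (hn2 : F.n2 a = preCard F a) (hm1 : F.m1 a = 1) :
    designates F lam a Lab.out ↔ 0 < inCnt F lam a := by
  have := outCnt_add_inCnt_le_preCard F lam a
  simp only [designates, hn2, hm1]
  omega

lemma designates_undec_iff (hn1 : F.n1 a = preCard F a) (hn2 : F.n2 a = preCard F a)
    (hm1 : F.m1 a = 1) (hm2 : F.m2 a = 1) :
    designates F lam a Lab.undec ↔ outCnt F lam a < preCard F a ∧ inCnt F lam a = 0 := by
  have := outCnt_add_inCnt_le_preCard F lam a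
  simp only [designates, hn1, hn2, hm1, hm2]
  omega

lemma existsUnique_designates (hn1 : F.n1 a = preCard F a) (hn2 : F.n2 a = preCard F a)
    (hm1 : F.m1 a = 1) (hm2 : F.m2 a = 1) : ∃! l : Lab, designates F lam a l := by
  have hle := outCnt_add_inCnt_le_preCard F lam a
  have hinn := designates_inn_iff (lam := lam) hn1 hm2
  have hout := designates_out_iff (lam := lam) hn2 hm1
  have hundec := designates_undec_iff (lam := lam) hn1 hn2 hm1 hm2
  refine existsUnique_of_exists_of_unique ?_ ?_
  · by_cases hall : outCnt F lam a = preCard F a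
    · exact ⟨Lab.inn, hinn.2 hall⟩
    by_cases hsome : 0 < inCnt F lam a
    · exact ⟨Lab.out, hout.2 hsome⟩
    · exact ⟨Lab.undec, hundec.2 (by omega)⟩
  · rintro (_ | _ | _) (_ | _ | _) h₁ h₂ <;>
      simp only [hinn, hout, hundec] at h₁ h₂ <;> first | rfl | omega

end GroundedThresholds

theorem stmt11 (F : MMA A)
    (h : ∀ a, F.n1 a = preCard F a ∧ F.n2 a = preCard F a ∧ F.m1 a = 1 ∧ F.m2 a = 1) :
    ∀ (lam : A → Lab) (a : A),
      (designates F lam a Lab.inn ↔ ∀ b, F.R b a → lam b = Lab.out) ∧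
      (designates F lam a Lab.out ↔ ∃ b, F.R b a ∧ lam b = Lab.inn) ∧
      (designates F lam a Lab.undec ↔
        ¬ (∀ b, F.R b a → lam b = Lab.out) ∧ ¬ (∃ b, F.R b a ∧ lam b = Lab.inn)) ∧
      (∃! l : Lab, designates F lam a l) := by
  intro lam a
  obtain ⟨hn1, hn2, hm1, hm2⟩ := h a
  have hle := outCnt_add_inCnt_le_preCard F lam a
  refine ⟨(designates_inn_iff hn1 hm2).trans (outCnt_eq_preCard_iff F lam a),
    (designates_out_iff hn2 hm1).trans (inCnt_pos_iff F lam a), ?_,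
    existsUnique_designates hn1 hn2 hm1 hm2⟩
  rw [designates_undec_iff hn1 hn2 hm1 hm2, ← outCnt_eq_preCard_iff, ← inCnt_pos_iff]
  omega
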